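/- Every dagger category that admits polar decomposition is unitary: whenever two objects A and B are isomorphic, there exists a unitary isomorphism A ≅ B. -/
import Mathlib


open CategoryTheory

universe v u v₁ u₁ v₂ u₂

class DaggerCategory (C : Type u) [Category.{v} C] where
  dag : ∀ {A B : C}, (A ⟶ B) → (B ⟶ A)
  dag_id : ∀ (A : C), dag (𝟙 A) = 𝟙 A
  dag_comp : ∀ {A B X : C} (f : A ⟶ B) (g : B ⟶ X), dag (f ≫ g) = dag g ≫ dag f
  dag_dag : ∀ {A B : C} (f : A ⟶ B), dag (dag f) = f

postfix:max "†" => DaggerCategory.dag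

section Defs

variable {C : Type u} [Category.{v} C] [DaggerCategory C]

/-- A morphism `f` is a partial isometry if `f ∘ f† ∘ f = f`. -/
def IsPartialIsometry {A B : C} (f : A ⟶ B) : Prop :=
  f ≫ f† ≫ f = f

/-- A morphism `f : A ⟶ B` is unitary if `f† ∘ f = 𝟙 A` and `f ∘ f† = 𝟙 B`. -/
def IsUnitary {A B : C} (f : A ⟶ B) : Prop :=
  f ≫ f† = 𝟙 A ∧ f† ≫ f = 𝟙 B

/-- A morphism `f` is dagger monic (an isometry) if `f† ∘ f = 𝟙`. -/
def DaggerMonic {A B : C} (f : A ⟶ B) : Prop :=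
  f ≫ f† = 𝟙 A

/-- `(L, l)` is a limit cone over the diagram `D`. -/
def IsLimitCone {J : Type u₁} [Category.{v₁} J] (D : J ⥤ C) (L : C)
    (l : ∀ j : J, L ⟶ D.obj j) : Prop :=
  (∀ {j j' : J} (f : j ⟶ j'), l j ≫ D.map f = l j') ∧
  (∀ (M : C) (m : ∀ j : J, M ⟶ D.obj j),
    (∀ {j j' : J} (f : j ⟶ j'), m j ≫ D.map f = m j') →
    ∃! g : M ⟶ L, ∀ j : J, g ≫ l j = m j)

/-- A class of objects `Ω` is weakly initial when every object admits a morphism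
from some member of `Ω`. -/
def WeaklyInitial {J : Type u₁} [Category.{v₁} J] (Ω : Set J) : Prop :=
  ∀ B : J, ∃ A ∈ Ω, Nonempty (A ⟶ B)

/-- `(L, l)` is a dagger limit of `(D, Ω)`: a limit cone whose legs at `Ω` are
partial isometries with pairwise commuting induced projections. -/
def IsDaggerLimit {J : Type u₁} [Category.{v₁} J] (D : J ⥤ C) (Ω : Set J) (L : C)
    (l : ∀ j : J, L ⟶ D.obj j) : Prop :=
  IsLimitCone D L l ∧
  (∀ j ∈ Ω, IsPartialIsometry (l j)) ∧
  (∀ j ∈ Ω, ∀ j' ∈ Ω,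
    (l j ≫ (l j)†) ≫ (l j' ≫ (l j')†) = (l j' ≫ (l j')†) ≫ (l j ≫ (l j)†))

end Defs

/-- `C` admits polar decomposition: every morphism `f : A ⟶ B` factors as
`f = p ∘ i = j ∘ p` where `p` is a partial isometry and `i`, `j` are self-adjoint
bimorphisms. -/
def AdmitsPolarDecomposition (C : Type u) [Category.{v} C] [DaggerCategory C] : Prop :=
  ∀ {A B : C} (f : A ⟶ B), ∃ (p : A ⟶ B) (i : A ⟶ A) (j : B ⟶ B),
    IsPartialIsometry p ∧ i† = i ∧ j† = j ∧
    Mono i ∧ Epi i ∧ Mono j ∧ Epi j ∧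
    f = i ≫ p ∧ f = p ≫ j

/-- Every dagger category that admits polar decomposition is unitary:
isomorphic objects are unitarily isomorphic. -/
theorem unitary_of_admitsPolarDecomposition
    (C : Type u) [Category.{v} C] [DaggerCategory C]
    (hpolar : AdmitsPolarDecomposition C) :
    ∀ A B : C, Nonempty (A ≅ B) → ∃ u : A ⟶ B, IsUnitary u := by
  intro A B ⟨e⟩
  obtain ⟨p, i, j, hp, hi, hj, hmi, hei, hmj, hej, hf1, hf2⟩ := hpolar e.hom
  have hmono : Mono p := ⟨fun {Z} g h hgh => by
    have : g ≫ e.hom = h ≫ e.hom := by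
      rw [hf2, ← Category.assoc, ← Category.assoc, hgh]
    exact (cancel_mono e.hom).mp this⟩
  have hepi : Epi p := ⟨fun {Z} g h hgh => by
    have : e.hom ≫ g = e.hom ≫ h := by
      rw [hf1, Category.assoc, Category.assoc, hgh]
    exact (cancel_epi e.hom).mp this⟩
  refine ⟨p, ?_, ?_⟩
  · have : (p ≫ p†) ≫ p = 𝟙 A ≫ p := by
      rw [Category.id_comp, Category.assoc]; exact hp
    exact (cancel_mono p).mp this
  · have : p ≫ (p† ≫ p) = p ≫ 𝟙 B := by
      rw [Category.comp_id, ← Category.assoc, Category.assoc]; exact hp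
    exact (cancel_epi p).mp this
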